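/- Let G be a trivalent, 2-edge-connected finite graph and A ⊆ V(G) acyclic. Then A is dependent in M_G if and only if A contains a nonempty subset A' with ω(A') < ω(V−A'), where ω denotes the number of connected components of the induced subgraph. Moreover, if A is a circuit of M_G, then ω(A) + 1 = ω(V−A). -/

import Mathlib

/-!
For acyclic `A` in a trivalent graph the forest `G[A]` has `|A| - ω(A)` edges, hence
`|δ(A)| = 2|A| + ω(A)`; deleting `δ(A)` leaves `G[V - A]` together with `|A|` isolated
vertices. Substituting both counts into `r*(δ(A)) = |δ(A)| + r(E - δ(A)) - r(E)` gives
`r*(δ(A)) = |A| + ω(A) + 1 - ω(V - A)`, so `r*(δ(A)) ≤ |A|` iff `ω(A) < ω(V - A)`, and the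
circuits are the minimal sets with this property.

For a circuit `A` and `v ∈ A`, let `d₁` and `d₂` count the edges at `v` inside `A` and inside
`(V - A) ∪ {v}`; no edge is counted twice, so `d₁ + d₂ ≤ 3`. Deleting `v` from `A` raises `ω` by
at most `d₁ - 1`, adding it to `V - A` lowers `ω` by at most `d₂ - 1`, and minimality of `A` gives
`ω(V - A + v) ≤ ω(A - v)`; together these force `ω(V - A) ≤ ω(A) + 1`. When `A = {v}` there is
no proper subset to compare with; instead, if `G - v` had two components, one of them would
receive a single edge from `v`, and that edge would be a bridge.
-/

/-- A finite undirected multigraph on vertex type `V` with edge type `E`: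
each edge has an unordered pair of endpoints (possibly a loop). -/
structure Multigraph (V E : Type*) where
  ends : E → Sym2 V

namespace Multigraph

variable {V E : Type*} (G : Multigraph V E)

/-- `δ(A)`: the set of edges incident to at least one vertex of `A`. -/
def inc (A : Set V) : Set E := {e | ∃ v ∈ A, v ∈ G.ends e}

/-- Number of connected components of the spanning subgraph of `G`
with edge set `B` (on the full vertex set `V`). -/
noncomputable def numComponentsEdges (B : Set E) : ℕ :=
  Nat.card (Quot (fun u v : V => ∃ e ∈ B, G.ends e = s(u, v)))

/-- Number of connected components `ω(S)` of the subgraph of `G` induced on `S`. -/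
noncomputable def numComponentsSub (S : Set V) : ℕ :=
  Nat.card (Quot (fun x y : S => ∃ e, G.ends e = s(x.1, y.1)))

/-- Rank function of the cycle (graphic) matroid of `G`:
`r(B) = |V| - (number of components of (V, B))`. -/
noncomputable def cycleRank (B : Set E) : ℕ :=
  Nat.card V - G.numComponentsEdges B

/-- Rank function `r*` of the bond (cographic) matroid of `G`:
`r*(B) = |B| + r(E - B) - r(E)`. -/
noncomputable def bondRank (B : Set E) : ℕ :=
  B.ncard + G.cycleRank Bᶜ - G.cycleRank Set.univ

/-- `G` is connected. -/
def Connected : Prop := G.numComponentsEdges Set.univ = 1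

/-- `G` is 2-edge-connected: it is connected and deleting any single edge
leaves it connected. -/
def TwoEdgeConnected : Prop :=
  G.Connected ∧ ∀ e : E, G.numComponentsEdges {e}ᶜ = 1

/-- `G` is 2-vertex-connected: it is connected and deleting any single vertex
leaves it connected. -/
def TwoVertexConnected : Prop :=
  G.Connected ∧ ∀ v : V, G.numComponentsSub {v}ᶜ = 1

/-- `G` has no loops. -/
def Loopless : Prop := ∀ e : E, ¬ (G.ends e).IsDiag

open Classical in
/-- The degree of a vertex, with loops counting twice. -/
noncomputable def degree [Fintype E] (v : V) : ℕ :=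
  ∑ e : E, (if G.ends e = s(v, v) then 2 else if v ∈ G.ends e then 1 else 0)

/-- `G` is trivalent: every vertex has degree `3`. -/
def Trivalent [Fintype E] : Prop := ∀ v : V, G.degree v = 3

/-- `A ⊆ V` is the vertex set of a cycle `v₁, …, vₙ, v₁` of `G`: there are
pairwise distinct vertices `f 0, …, f (n-1)` with range `A` and pairwise
distinct edges joining cyclically consecutive vertices. -/
def IsCycleSet (A : Set V) : Prop :=
  ∃ n : ℕ, 0 < n ∧ ∃ f : ZMod n → V, Function.Injective f ∧ Set.range f = A ∧
    ∃ e : ZMod n → E, Function.Injective e ∧ ∀ i, G.ends (e i) = s(f i, f (i + 1))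

/-- The subgraph induced on `A` contains a cycle. -/
def Cyclic (A : Set V) : Prop := ∃ C ⊆ A, G.IsCycleSet C

/-- The subgraph induced on `A` is acyclic (a forest). -/
def Acyclic (A : Set V) : Prop := ¬ G.Cyclic A

/-- `A` is a circuit of the graph curve matroid `M_G`: `A` is nonempty,
`r*(δ(A)) ≤ |A|`, and no proper nonempty subset `A'` satisfies `r*(δ(A')) ≤ |A'|`. -/
noncomputable def IsCircuitMG (A : Set V) : Prop :=
  A.Nonempty ∧ G.bondRank (G.inc A) ≤ A.ncard ∧
    ∀ A' : Set V, A' ⊂ A → A'.Nonempty → A'.ncard < G.bondRank (G.inc A')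

/-- `A` is dependent in the graph curve matroid `M_G`, i.e. contains a circuit. -/
noncomputable def DepMG (A : Set V) : Prop := ∃ C ⊆ A, G.IsCircuitMG C

/-- `A` is independent in the graph curve matroid `M_G`. -/
noncomputable def IndepMG (A : Set V) : Prop := ¬ G.DepMG A

/-- The rank function of the graph curve matroid `M_G`:
the maximal cardinality of an independent subset. -/
noncomputable def rankMG (A : Set V) : ℕ :=
  sSup {n | ∃ I ⊆ A, G.IndepMG I ∧ I.ncard = n}

/-- `B` is a basis of the graph curve matroid `M_G`:
a maximal independent set. -/
noncomputable def IsBasisMG (B : Set V) : Prop :=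
  G.IndepMG B ∧ ∀ I : Set V, G.IndepMG I → B ⊆ I → I = B

end Multigraph

section Quot

variable {α : Type*} [Finite α] {r r' : α → α → Prop}

theorem card_quot_le_card_quot_add_one (hle : ∀ a b, r a b → r' a b) {u v : α}
    (hr' : ∀ a b, r' a b → r a b ∨ s(a, b) = s(u, v)) :
    Nat.card (Quot r) ≤ Nat.card (Quot r') + 1 := by
  classical
  let f : Quot r → Quot r' := Quot.map id hle
  -- `g` merges the class of `v` into that of `u`; it is a left inverse of `f` off the class of `v`
  let g : Quot r' → Quot r := Quot.lift
    (fun a => if Quot.mk r a = Quot.mk r v then Quot.mk r u else Quot.mk r a) (by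
      intro a b hab
      rcases hr' a b hab with h | h
      · simp only [Quot.sound h]
      · rcases Sym2.eq_iff.1 h with ⟨rfl, rfl⟩ | ⟨rfl, rfl⟩ <;> simp)
  have hgf : ∀ x, x ≠ Quot.mk r v → g (f x) = x :=
    Quot.ind fun a ha => by simp [f, g, Quot.map, ha]
  have hinj : Set.InjOn f {Quot.mk r v}ᶜ := fun x hx y hy h => by
    rw [← hgf x hx, ← hgf y hy, h]
  calc Nat.card (Quot r) = ({Quot.mk r v}ᶜ : Set (Quot r)).ncard + 1 := by
        rw [← Set.ncard_add_ncard_compl {Quot.mk r v}, Set.ncard_singleton, add_comm]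
    _ = (f '' {Quot.mk r v}ᶜ).ncard + 1 := by rw [hinj.ncard_image]
    _ ≤ Nat.card (Quot r') + 1 := by gcongr; exact Set.ncard_le_card _

theorem card_quot_lt_card_quot (hle : ∀ a b, r a b → r' a b) {u v : α} (huv : r' u v)
    (hne : Quot.mk r u ≠ Quot.mk r v) : Nat.card (Quot r') < Nat.card (Quot r) := by
  have := Fintype.ofFinite (Quot r)
  have := Fintype.ofFinite (Quot r')
  simp only [Nat.card_eq_fintype_card]
  refine Fintype.card_lt_of_surjective_not_injective (Quot.map id hle)
    (Quot.ind fun a => ⟨Quot.mk r a, rfl⟩) fun hinj => hne (hinj (Quot.sound huv))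

end Quot

theorem ZMod.val_add_one {n : ℕ} [NeZero n] (i : ZMod n) : (i + 1).val = (i.val + 1) % n := by
  rw [ZMod.val_add, ZMod.val_one_eq_one_mod, Nat.add_mod_mod]

theorem Set.ncard_eq_sum_ite {α : Type*} [Fintype α] (s : Set α) [DecidablePred (· ∈ s)] :
    s.ncard = ∑ a, if a ∈ s then 1 else 0 := by
  rw [Finset.sum_boole]
  simp [Set.ncard_eq_toFinset_card']

namespace Multigraph

variable {V E : Type*} (G : Multigraph V E)

-- `numComponentsEdges B` and `numComponentsSub S` are by definition the numbers of classes of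
-- `edgeRel B` and `inducedRel S`.
def edgeRel (B : Set E) (u v : V) : Prop := ∃ e ∈ B, G.ends e = s(u, v)

def inducedRel (S : Set V) (x y : S) : Prop := ∃ e, G.ends e = s(x.1, y.1)

def edgesWithin (S : Set V) : Set E := {e | ∀ x ∈ G.ends e, x ∈ S}

def crossing (P : V → Prop) : Set E :=
  {e | ∃ a b, G.ends e = s(a, b) ∧ P a ∧ ¬ P b}

theorem exists_ends_eq (e : E) : ∃ u v, G.ends e = s(u, v) := Sym2.exists.1 ⟨_, rfl⟩

variable {G}

theorem Cyclic.mono {A A' : Set V} (h : G.Cyclic A) (hA : A ⊆ A') : G.Cyclic A' :=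
  let ⟨C, hC, hcyc⟩ := h
  ⟨C, hC.trans hA, hcyc⟩

theorem Acyclic.anti {A A' : Set V} (h : G.Acyclic A') (hA : A ⊆ A') : G.Acyclic A :=
  fun hcyc => h (hcyc.mono hA)

theorem Acyclic.ends_ne_diag {A : Set V} (hA : G.Acyclic A) {v : V} (hv : v ∈ A) (e : E) :
    G.ends e ≠ s(v, v) := fun h =>
  hA ⟨{v}, Set.singleton_subset_iff.2 hv, 1, one_pos, fun _ => v,
    fun a b _ => Subsingleton.elim a b, Set.range_const, fun _ => e,
    fun a b _ => Subsingleton.elim a b, fun _ => h⟩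

theorem reachable_fromRel_of_mk_eq_mk {B : Set E} {u v : V}
    (h : Quot.mk (G.edgeRel B) u = Quot.mk (G.edgeRel B) v) :
    (SimpleGraph.fromRel (G.edgeRel B)).Reachable u v := by
  refine SimpleGraph.ConnectedComponent.exact
    (congrArg (Quot.lift (SimpleGraph.fromRel (G.edgeRel B)).connectedComponentMk
      fun a b hab => ?_) h)
  by_cases hab' : a = b
  · rw [hab']
  · exact SimpleGraph.ConnectedComponent.connectedComponentMk_eq_of_adj ⟨hab', Or.inl hab⟩

theorem exists_cycle_of_isPath {B : Set E} {e : E} (heB : e ∉ B) {u v : V}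
    (huv : G.ends e = s(u, v)) {p : (SimpleGraph.fromRel (G.edgeRel B)).Walk u v}
    (hp : p.IsPath) :
    ∃ n, 0 < n ∧ ∃ f : ZMod n → V, Function.Injective f ∧ ∃ c : ZMod n → E,
      Function.Injective c ∧ (∀ i, c i ∈ insert e B) ∧ ∀ i, G.ends (c i) = s(f i, f (i + 1)) := by
  set L := p.length
  have hstep : ∀ i < L, ∃ e ∈ B, G.ends e = s(p.getVert i, p.getVert (i + 1)) := by
    intro i hi
    obtain ⟨-, h | ⟨e, heB, he⟩⟩ := p.adj_getVert_succ hi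
    · exact h
    · exact ⟨e, heB, he.trans Sym2.eq_swap⟩
  choose q hqB hq using hstep
  have hinjE : ∀ i j, i < L → j < L →
      s(p.getVert i, p.getVert (i + 1)) = s(p.getVert j, p.getVert (j + 1)) → i = j := by
    intro i j hi hj h
    rw [← p.getElem_edges (by simpa using hi), ← p.getElem_edges (by simpa using hj)] at h
    exact hp.edges_nodup.getElem_inj_iff.1 h
  let f : ZMod (L + 1) → V := fun i => p.getVert i.val
  let c : ZMod (L + 1) → E := fun i => if h : i.val < L then q i.val h else e
  have hends : ∀ i, G.ends (c i) = s(f i, f (i + 1)) := by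
    intro i
    by_cases hi : i.val < L
    · simp only [c, f, dif_pos hi, hq, ZMod.val_add_one, Nat.mod_eq_of_lt (Nat.succ_lt_succ hi)]
    · have hiL : i.val = L := by have := ZMod.val_lt i; omega
      simp only [c, f, dif_neg hi, huv, ZMod.val_add_one, hiL, Nat.mod_self,
        SimpleGraph.Walk.getVert_zero, show p.getVert L = v from p.getVert_length, Sym2.eq_swap]
  have hcB : ∀ i, c i ∈ B ↔ i.val < L := by
    intro i
    by_cases hi : i.val < L
    · simp only [c, dif_pos hi, hqB, hi]
    · simp only [c, dif_neg hi, heB, hi]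
  refine ⟨L + 1, L.succ_pos, f, ?_, c, ?_, fun i => ?_, hends⟩
  · intro i j hij
    exact ZMod.val_injective _ (hp.getVert_injOn (Nat.lt_succ_iff.1 (ZMod.val_lt i))
      (Nat.lt_succ_iff.1 (ZMod.val_lt j)) hij)
  · intro i j hij
    have hi := ZMod.val_lt i
    have hj := ZMod.val_lt j
    by_cases hiL : i.val < L <;> by_cases hjL : j.val < L
    · have hs := congrArg G.ends hij
      rw [hends, hends] at hs
      simp only [f, ZMod.val_add_one, Nat.mod_eq_of_lt (Nat.succ_lt_succ hiL),
        Nat.mod_eq_of_lt (Nat.succ_lt_succ hjL)] at hs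
      exact ZMod.val_injective _ (hinjE _ _ hiL hjL hs)
    · exact absurd ((hcB j).1 (hij ▸ (hcB i).2 hiL)) hjL
    · exact absurd ((hcB i).1 (hij ▸ (hcB j).2 hjL)) hiL
    · exact ZMod.val_injective _ (by omega)
  · by_cases hi : i.val < L
    · exact Or.inr ((hcB i).2 hi)
    · exact Or.inl (dif_neg hi)

theorem cyclic_of_isPath {A : Set V} {B : Set E} {e : E} (hB : insert e B ⊆ G.edgesWithin A)
    (heB : e ∉ B) {u v : V} (huv : G.ends e = s(u, v))
    {p : (SimpleGraph.fromRel (G.edgeRel B)).Walk u v} (hp : p.IsPath) : G.Cyclic A := by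
  obtain ⟨n, hn, f, hf, c, hc, hcB, hends⟩ := exists_cycle_of_isPath heB huv hp
  exact ⟨Set.range f, Set.range_subset_iff.2 fun i => hB (hcB i) _ (hends i ▸ Sym2.mem_mk_left _ _),
    n, hn, f, hf, rfl, c, hc, hends⟩

theorem numComponentsEdges_empty : G.numComponentsEdges ∅ = Nat.card V :=
  Nat.card_congr
    { toFun := Quot.lift id fun _ _ ⟨_, he, _⟩ => absurd he (Set.notMem_empty _)
      invFun := Quot.mk _
      left_inv := Quot.ind fun _ => rfl
      right_inv := fun _ => rfl }

theorem compl_inc (A : Set V) : (G.inc A)ᶜ = G.edgesWithin Aᶜ := by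
  ext e
  simp only [inc, edgesWithin, Set.mem_compl_iff, Set.mem_ofPred_eq, not_exists, not_and]
  exact ⟨fun h x hx hxA => h x hxA hx, fun h x hxA hx => h x hx hxA⟩

theorem edgesWithin_mono {S T : Set V} (h : S ⊆ T) : G.edgesWithin S ⊆ G.edgesWithin T :=
  fun _ he x hx => h (he x hx)

theorem edgesWithin_diff_edgesWithin_sdiff_singleton_subset (T : Set V) (v : V) :
    G.edgesWithin T \ G.edgesWithin (T \ {v}) ⊆ {e | v ∈ G.ends e} := by
  rintro e ⟨heT, he⟩
  by_contra hv
  exact he fun x hx => ⟨heT x hx, fun (hxv : x = v) => hv (hxv ▸ hx)⟩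

theorem disjoint_edgesWithin {T₁ T₂ : Set V} {v : V} (hT : T₁ ∩ T₂ ⊆ {v})
    (hv : ∀ e, G.ends e ≠ s(v, v)) : Disjoint (G.edgesWithin T₁) (G.edgesWithin T₂) := by
  refine Set.disjoint_left.2 fun e he₁ he₂ => ?_
  obtain ⟨x, y, hxy⟩ := G.exists_ends_eq e
  have hmem : ∀ z ∈ G.ends e, z = v := fun z hz => hT ⟨he₁ z hz, he₂ z hz⟩
  exact hv e (by
    rw [hxy, hmem x (hxy ▸ Sym2.mem_mk_left x y), hmem y (hxy ▸ Sym2.mem_mk_right x y)])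

theorem exists_mem_crossing {B : Set E} (hB : G.numComponentsEdges B = 1) {P : V → Prop}
    {x y : V} (hx : P x) (hy : ¬ P y) : ∃ e ∈ B, e ∈ G.crossing P := by
  by_contra! h
  have hP : ∀ a b, G.edgeRel B a b → P a = P b := by
    rintro a b ⟨e, he, hab⟩
    refine propext ⟨fun ha => ?_, fun hb => ?_⟩
    · by_contra hb
      exact h e he ⟨a, b, hab, ha, hb⟩
    · by_contra ha
      exact h e he ⟨b, a, hab.trans Sym2.eq_swap, hb, ha⟩
  have : Subsingleton (Quot (G.edgeRel B)) := (Nat.card_eq_one_iff_unique.1 hB).1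
  have hxy : P x = P y :=
    congrArg (Quot.lift P hP) (Subsingleton.elim (Quot.mk _ x) (Quot.mk _ y))
  exact hy (hxy ▸ hx)

theorem TwoEdgeConnected.one_lt_ncard_crossing [Finite E] (h2 : G.TwoEdgeConnected)
    {P : V → Prop} {x y : V} (hx : P x) (hy : ¬ P y) : 1 < (G.crossing P).ncard := by
  obtain ⟨e₁, -, he₁⟩ := exists_mem_crossing h2.1 hx hy
  obtain ⟨e₂, he₂, he₂'⟩ := exists_mem_crossing (h2.2 e₁) hx hy
  exact (Set.one_lt_ncard_iff).2 ⟨e₁, e₂, he₁, he₂', fun h => he₂ h.symm⟩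

section Finite

variable [Finite V]

theorem numComponentsEdges_le_card (B : Set E) : G.numComponentsEdges B ≤ Nat.card V :=
  Nat.card_le_card_of_surjective _ Quot.mk_surjective

theorem numComponentsEdges_le_insert_add_one (B : Set E) (e : E) :
    G.numComponentsEdges B ≤ G.numComponentsEdges (insert e B) + 1 := by
  obtain ⟨u, v, huv⟩ := G.exists_ends_eq e
  refine card_quot_le_card_quot_add_one (r := G.edgeRel B) (u := u) (v := v)
    (fun _ _ ⟨f, hf, hfe⟩ => ⟨f, Set.mem_insert_of_mem _ hf, hfe⟩) ?_
  rintro _ _ ⟨f, rfl | hf, hfe⟩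
  · exact Or.inr (hfe.symm.trans huv)
  · exact Or.inl ⟨f, hf, hfe⟩

theorem numComponentsEdges_insert_lt {B : Set E} {e : E} {u v : V} (huv : G.ends e = s(u, v))
    (hne : Quot.mk (G.edgeRel B) u ≠ Quot.mk (G.edgeRel B) v) :
    G.numComponentsEdges (insert e B) < G.numComponentsEdges B :=
  card_quot_lt_card_quot (r := G.edgeRel B)
    (fun _ _ ⟨f, hf, hfe⟩ => ⟨f, Set.mem_insert_of_mem _ hf, hfe⟩)
    ⟨e, Set.mem_insert _ _, huv⟩ hne

theorem numComponentsEdges_edgesWithin (S : Set V) :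
    G.numComponentsEdges (G.edgesWithin S) = G.numComponentsSub S + Sᶜ.ncard := by
  classical
  have hmem : ∀ {a b}, G.edgeRel (G.edgesWithin S) a b → a ∈ S ∧ b ∈ S :=
    fun ⟨e, he, hab⟩ =>
      ⟨he _ (hab ▸ Sym2.mem_mk_left _ _), he _ (hab ▸ Sym2.mem_mk_right _ _)⟩
  let F : Quot (G.edgeRel (G.edgesWithin S)) → Quot (G.inducedRel S) ⊕ ↥Sᶜ :=
    Quot.lift (fun a => if h : a ∈ S then .inl (Quot.mk _ ⟨a, h⟩) else .inr ⟨a, h⟩)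
      fun a b hab => by
        rw [dif_pos (hmem hab).1, dif_pos (hmem hab).2]
        obtain ⟨e, -, h⟩ := hab
        exact congrArg _ (Quot.sound ⟨e, h⟩)
  let F' : Quot (G.inducedRel S) ⊕ ↥Sᶜ → Quot (G.edgeRel (G.edgesWithin S)) :=
    Sum.elim (Quot.lift (fun x => Quot.mk _ x.1) fun x y ⟨e, h⟩ =>
        Quot.sound ⟨e, fun z hz => by
          rcases Sym2.mem_iff.1 (h ▸ hz) with rfl | rfl <;> simp, h⟩)
      fun w => Quot.mk _ w.1
  have hFF' : ∀ y, F (F' y) = y := by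
    rintro (y | w)
    · induction y using Quot.ind
      simp [F, F']
    · simp [F, F', dif_neg w.2]
  have hF'F : ∀ x, F' (F x) = x := Quot.ind fun a => by
    by_cases h : a ∈ S <;> simp [F, F', h]
  change Nat.card (Quot (G.edgeRel _)) = Nat.card (Quot (G.inducedRel S)) + _
  rw [Nat.card_congr ⟨F, F', hF'F, hFF'⟩, Nat.card_sum, Nat.card_coe_set_eq]

theorem numComponentsSub_le_ncard (S : Set V) : G.numComponentsSub S ≤ S.ncard := by
  rw [← Nat.card_coe_set_eq]
  exact Nat.card_le_card_of_surjective _ Quot.mk_surjective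

theorem numComponentsSub_pos {S : Set V} (hS : S.Nonempty) :
    0 < G.numComponentsSub S :=
  have : Nonempty (Quot (G.inducedRel S)) := ⟨Quot.mk _ ⟨_, hS.some_mem⟩⟩
  Nat.card_pos (α := Quot (G.inducedRel S))

theorem depMG_iff_exists_bondRank_le {A : Set V} :
    G.DepMG A ↔ ∃ B ⊆ A, B.Nonempty ∧ G.bondRank (G.inc B) ≤ B.ncard := by
  refine ⟨fun ⟨C, hCA, hC, hCr, _⟩ => ⟨C, hCA, hC, hCr⟩, fun ⟨B, hBA, hB⟩ => ?_⟩
  obtain ⟨C, hCB, hC⟩ := exists_minimal_le_of_wellFoundedLT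
    (fun B : Set V => B.Nonempty ∧ G.bondRank (G.inc B) ≤ B.ncard) B hB
  exact ⟨C, hCB.trans hBA, hC.prop.1, hC.prop.2,
    fun C' hC' hne => not_le.1 fun h => hC.not_prop_of_lt hC' ⟨hne, h⟩⟩

variable [Finite E]

theorem numComponentsEdges_le_union_add_ncard (B F : Set E) :
    G.numComponentsEdges B ≤ G.numComponentsEdges (B ∪ F) + F.ncard := by
  induction F, F.toFinite using Set.Finite.induction_on with
  | empty => simp
  | @insert e F he hF ih =>
    rw [Set.union_insert, Set.ncard_insert_of_notMem he hF]
    have := numComponentsEdges_le_insert_add_one (G := G) (B ∪ F) e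
    omega

theorem ncard_add_numComponentsEdges_of_subset {A : Set V} (hA : G.Acyclic A)
    {B : Set E} (hB : B ⊆ G.edgesWithin A) : B.ncard + G.numComponentsEdges B = Nat.card V := by
  classical
  induction B, B.toFinite using Set.Finite.induction_on with
  | empty => simp [numComponentsEdges_empty]
  | @insert e B he hB' ih =>
    have hBA := (Set.subset_insert e B).trans hB
    obtain ⟨u, v, huv⟩ := G.exists_ends_eq e
    have hne : Quot.mk (G.edgeRel B) u ≠ Quot.mk (G.edgeRel B) v := fun hconn =>
      hA (cyclic_of_isPath hB he huv (reachable_fromRel_of_mk_eq_mk hconn).some.bypass_isPath)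
    have := numComponentsEdges_insert_lt huv hne
    have := numComponentsEdges_le_insert_add_one (G := G) B e
    rw [Set.ncard_insert_of_notMem he hB']
    have := ih hBA
    omega

theorem ncard_edgesWithin_add_numComponentsSub {A : Set V} (hA : G.Acyclic A) :
    (G.edgesWithin A).ncard + G.numComponentsSub A = A.ncard := by
  have h := ncard_add_numComponentsEdges_of_subset hA subset_rfl
  rw [numComponentsEdges_edgesWithin, ← Set.ncard_add_ncard_compl A] at h
  omega

theorem numComponentsSub_sdiff_singleton_add_one_le {T : Set V} {v : V} (hv : v ∈ T) :
    G.numComponentsSub (T \ {v}) + 1 ≤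
      G.numComponentsSub T + (G.edgesWithin T \ G.edgesWithin (T \ {v})).ncard := by
  have h := numComponentsEdges_le_union_add_ncard (G := G) (G.edgesWithin (T \ {v}))
    (G.edgesWithin T \ G.edgesWithin (T \ {v}))
  rw [Set.union_sdiff_cancel (edgesWithin_mono Set.sdiff_subset), numComponentsEdges_edgesWithin,
    numComponentsEdges_edgesWithin] at h
  have h₁ := Set.ncard_add_ncard_compl T
  have h₂ := Set.ncard_add_ncard_compl (T \ {v})
  have h₃ := Set.ncard_sdiff_singleton_add_one hv
  omega

end Finite

section Fintype

variable [Fintype E]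

theorem ncard_setOf_mem_ends_eq_degree {v : V} (hv : ∀ e, G.ends e ≠ s(v, v)) :
    {e | v ∈ G.ends e}.ncard = G.degree v := by
  classical
  simp only [degree, hv, if_false, Set.ncard_eq_sum_ite, Set.mem_ofPred_eq]

theorem Trivalent.ncard_setOf_mem_ends (h3 : G.Trivalent) {v : V}
    (hv : ∀ e, G.ends e ≠ s(v, v)) : {e | v ∈ G.ends e}.ncard = 3 :=
  (ncard_setOf_mem_ends_eq_degree hv).trans (h3 v)

theorem Trivalent.ncard_edgesWithin_sdiff_add_le (h3 : G.Trivalent) {T₁ T₂ : Set V} {v : V}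
    (hT : T₁ ∩ T₂ ⊆ {v}) (hv : ∀ e, G.ends e ≠ s(v, v)) :
    (G.edgesWithin T₁ \ G.edgesWithin (T₁ \ {v})).ncard +
      (G.edgesWithin T₂ \ G.edgesWithin (T₂ \ {v})).ncard ≤ 3 := by
  rw [← Set.ncard_union_eq ((disjoint_edgesWithin hT hv).mono Set.sdiff_subset Set.sdiff_subset),
    ← h3.ncard_setOf_mem_ends hv]
  exact Set.ncard_le_ncard (Set.union_subset
    (edgesWithin_diff_edgesWithin_sdiff_singleton_subset T₁ v)
    (edgesWithin_diff_edgesWithin_sdiff_singleton_subset T₂ v))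

variable [Fintype V]

open Classical in
theorem ncard_inc_add_ncard_edgesWithin {A : Set V}
    (hA : ∀ v ∈ A, ∀ e, G.ends e ≠ s(v, v)) :
    (G.inc A).ncard + (G.edgesWithin A).ncard =
      ∑ v ∈ A.toFinset, {e | v ∈ G.ends e}.ncard := by
  have hedge : ∀ e, (if e ∈ G.inc A then 1 else 0) + (if e ∈ G.edgesWithin A then 1 else 0) =
      ∑ v ∈ A.toFinset, if v ∈ G.ends e then 1 else 0 := by
    intro e
    obtain ⟨x, y, hxy⟩ := G.exists_ends_eq e
    have hinc : e ∈ G.inc A ↔ x ∈ A ∨ y ∈ A := by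
      simp only [inc, hxy, Sym2.mem_iff, Set.mem_ofPred_eq]
      constructor
      · rintro ⟨v, hv, rfl | rfl⟩ <;> simp [hv]
      · rintro (hx | hy)
        exacts [⟨x, hx, .inl rfl⟩, ⟨y, hy, .inr rfl⟩]
    have hwithin : e ∈ G.edgesWithin A ↔ x ∈ A ∧ y ∈ A := by simp [edgesWithin, hxy]
    by_cases hxy' : x = y
    · subst hxy'
      have hx : x ∉ A := fun hx => hA x hx e hxy
      simp [hinc, hwithin, hxy, hx]
    · have hsplit : ∀ v, (if v ∈ s(x, y) then 1 else 0) =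
          (if v = x then 1 else 0) + (if v = y then 1 else 0) := by
        intro v
        by_cases hvx : v = x <;> by_cases hvy : v = y <;> simp_all
      simp only [hinc, hwithin, hxy, hsplit, Finset.sum_add_distrib, Finset.sum_ite_eq',
        Set.mem_toFinset]
      by_cases hx : x ∈ A <;> by_cases hy : y ∈ A <;> simp [hx, hy]
  simp only [Set.ncard_eq_sum_ite, ← Finset.sum_add_distrib, hedge, Set.mem_ofPred_eq]
  exact Finset.sum_comm

theorem Trivalent.ncard_inc (h3 : G.Trivalent) {A : Set V} (hA : G.Acyclic A) :
    (G.inc A).ncard = 2 * A.ncard + G.numComponentsSub A := by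
  classical
  have h := ncard_inc_add_ncard_edgesWithin fun v hv => hA.ends_ne_diag hv
  rw [Finset.sum_congr rfl fun v hv =>
      h3.ncard_setOf_mem_ends (hA.ends_ne_diag (Set.mem_toFinset.1 hv)),
    Finset.sum_const, smul_eq_mul, ← Set.ncard_eq_toFinset_card'] at h
  have := ncard_edgesWithin_add_numComponentsSub hA
  omega

theorem Trivalent.bondRank_inc_le_ncard_iff (h3 : G.Trivalent) (hG : G.Connected) {A : Set V}
    (hA : G.Acyclic A) :
    G.bondRank (G.inc A) ≤ A.ncard ↔ G.numComponentsSub A < G.numComponentsSub Aᶜ := by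
  have hcompl : G.numComponentsEdges (G.inc A)ᶜ = G.numComponentsSub Aᶜ + A.ncard := by
    rw [compl_inc, numComponentsEdges_edgesWithin, compl_compl]
  have := h3.ncard_inc hA
  have := numComponentsSub_le_ncard (G := G) Aᶜ
  have := Set.ncard_add_ncard_compl A
  have hG' : G.numComponentsEdges Set.univ = 1 := hG
  have := hG' ▸ numComponentsEdges_le_card (G := G) Set.univ
  rw [bondRank, cycleRank, cycleRank, hcompl, hG']
  omega

theorem Trivalent.depMG_iff (h3 : G.Trivalent) (hG : G.Connected) {A : Set V}
    (hA : G.Acyclic A) : G.DepMG A ↔ ∃ A' ⊆ A, A'.Nonempty ∧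
      G.numComponentsSub A' < G.numComponentsSub A'ᶜ := by
  rw [depMG_iff_exists_bondRank_le]
  exact exists_congr fun B => and_congr_right fun hBA => and_congr_right fun _ =>
    h3.bondRank_inc_le_ncard_iff hG (hA.anti hBA)

theorem Trivalent.numComponentsSub_compl_singleton_le_one (h3 : G.Trivalent)
    (h2 : G.TwoEdgeConnected) {v : V} (hv : ∀ e, G.ends e ≠ s(v, v)) :
    G.numComponentsSub {v}ᶜ ≤ 1 := by
  by_contra! hlt
  obtain ⟨κ₁, κ₂, hκ⟩ := (Finite.one_lt_card_iff_nontrivial.1 hlt).exists_pair_ne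
  let P (κ : Quot (G.inducedRel {v}ᶜ)) (z : V) : Prop :=
    ∃ h : z ∈ ({v}ᶜ : Set V), Quot.mk _ ⟨z, h⟩ = κ
  have hcross : ∀ κ, ∀ e ∈ G.crossing (P κ), ∃ a, G.ends e = s(a, v) ∧ P κ a := by
    rintro κ e ⟨a, b, hab, ⟨ha, rfl⟩, hb⟩
    by_cases hbv : b = v
    · exact ⟨a, hbv ▸ hab, ha, rfl⟩
    · exact absurd ⟨hbv, (Quot.sound ⟨e, hab⟩).symm⟩ hb
  have hsub : ∀ κ, G.crossing (P κ) ⊆ {e | v ∈ G.ends e} := fun κ e he => by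
    obtain ⟨a, h, -⟩ := hcross κ e he
    show v ∈ G.ends e
    rw [h]
    exact Sym2.mem_mk_right a v
  have hdisj : Disjoint (G.crossing (P κ₁)) (G.crossing (P κ₂)) :=
    Set.disjoint_left.2 fun e he₁ he₂ => by
      obtain ⟨a₁, h₁, _, rfl⟩ := hcross _ e he₁
      obtain ⟨a₂, h₂, _, rfl⟩ := hcross _ e he₂
      obtain rfl : a₁ = a₂ := Sym2.congr_left.1 (h₁.symm.trans h₂)
      exact hκ rfl
  have hcard : ∀ κ, 1 < (G.crossing (P κ)).ncard := by
    intro κ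
    obtain ⟨⟨z, hz⟩, rfl⟩ := Quot.exists_rep κ
    exact h2.one_lt_ncard_crossing ⟨hz, rfl⟩ fun ⟨h, _⟩ => h rfl
  have := Set.ncard_union_eq hdisj
  have := Set.ncard_le_ncard (Set.union_subset (hsub κ₁) (hsub κ₂))
  rw [h3.ncard_setOf_mem_ends hv] at this
  have := hcard κ₁
  have := hcard κ₂
  omega

theorem IsCircuitMG.numComponentsSub_add_one {A : Set V} (hC : G.IsCircuitMG A) (h3 : G.Trivalent)
    (h2 : G.TwoEdgeConnected) (hA : G.Acyclic A) :
    G.numComponentsSub A + 1 = G.numComponentsSub Aᶜ := by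
  obtain ⟨⟨v, hv⟩, hrank, hmin⟩ := hC
  have hlt := (h3.bondRank_inc_le_ncard_iff h2.1 hA).1 hrank
  have hnl := hA.ends_ne_diag hv
  rcases (A \ {v}).eq_empty_or_nonempty with hA' | hA'
  · obtain rfl : A = {v} := (Set.sdiff_eq_empty.1 hA').antisymm (Set.singleton_subset_iff.2 hv)
    have := h3.numComponentsSub_compl_singleton_le_one h2 hnl
    have := numComponentsSub_pos (G := G) (Set.singleton_nonempty v)
    omega
  · have hle : G.numComponentsSub (A \ {v})ᶜ ≤ G.numComponentsSub (A \ {v}) := not_lt.1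
      ((h3.bondRank_inc_le_ncard_iff h2.1 (hA.anti Set.sdiff_subset)).not.1
        (not_le.2 (hmin _ (Set.sdiff_singleton_ssubset.2 hv) hA')))
    have h₁ := numComponentsSub_sdiff_singleton_add_one_le (G := G) hv
    have h₂ := numComponentsSub_sdiff_singleton_add_one_le (G := G)
      (show v ∈ (A \ {v})ᶜ by simp)
    have h₃ := h3.ncard_edgesWithin_sdiff_add_le (T₁ := A) (T₂ := (A \ {v})ᶜ)
      (fun x ⟨hxA, hx⟩ => by simpa [hxA] using hx) hnl
    rw [show (A \ {v})ᶜ \ {v} = Aᶜ by ext x; by_cases hx : x = v <;> simp [hx, hv]] at h₂ h₃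
    omega

end Fintype

end Multigraph

/-- For a trivalent 2-edge-connected finite graph `G` and an
acyclic `A ⊆ V`: `A` is dependent in `M_G` iff it contains a nonempty subset
`A'` with `ω(A') < ω(V-A')`; moreover if `A` is a circuit of `M_G` then
`ω(A) + 1 = ω(V-A)`. -/
theorem acyclic_depMG_iff_and_circuit_components {V E : Type*} [Fintype V] [Fintype E]
    (G : Multigraph V E) (h3 : G.Trivalent) (h2 : G.TwoEdgeConnected)
    (A : Set V) (hA : G.Acyclic A) :
    (G.DepMG A ↔ ∃ A' ⊆ A, A'.Nonempty ∧
        G.numComponentsSub A' < G.numComponentsSub A'ᶜ) ∧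
    (G.IsCircuitMG A → G.numComponentsSub A + 1 = G.numComponentsSub Aᶜ) :=
  ⟨h3.depMG_iff h2.1 hA, fun hC => hC.numComponentsSub_add_one h3 h2 hA⟩
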